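/- Let X_1,…,X_n be real numbers and let ξ_{k_1,k_2} = Σ_{i=k_1}^{k_2} X_i if 1 ≤ k_1 ≤ k_2 ≤ n and ξ_{k_1,k_2} = 0 otherwise. For 1 ≤ k ≤ n−1 define Shao and Zhang's self-normalizer V_n(k) = n^{−2} [ Σ_{i=1}^{k} ( ξ_{1,i} − (i/k) ξ_{1,k} )² + Σ_{i=k+1}^{n} ( ξ_{i,n} − ((n−i+1)/(n−k)) ξ_{k+1,n} )² ]. Define the localized CUSUM L(j | s, e) = (e−s+1)^{−1/2} Σ_{i=s}^{j} ( X_i − (e−s+1)^{−1} Σ_{i'=s}^{e} X_{i'} ) for 1 ≤ s ≤ j ≤ e ≤ n, and the localized self-normalizer V^{(C)}(k | s, e) = ((k−s+1)/(e−s+1)²) Σ_{j=s}^{k} L(j | s, k)² + ((e−k)/(e−s+1)²) Σ_{j=k+1}^{e} L(j | k+1, e)². Then for every 1 ≤ k ≤ n−1, V_n(k) = V^{(C)}(k | 1, n); consequently Shao's one-change-point statistic C_n(k)²/V_n(k) coincides with the locally self-normalized statistic L(k | 1, n)²/V^{(C)}(k | 1, n), where C_n(k) = n^{−1/2} Σ_{i=1}^{k}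 (X_i − n^{−1} ξ_{1,n}). -/

import Mathlib

/-!
Both self-normalizers are built from the same "bridges" of the two segments: the partial sum
`∑_{i=a}^{j-1} X i` minus its share `(j - a)/(b - a + 1)` of the segment total, which vanishes at
`j = a` and at `j = b + 1`. On the left segment Shao and Zhang's forward partial sums are exactly
these bridges; on the right segment their backward partial sums are the negated bridges, and a
sum of squares of a sequence vanishing at both ends is unchanged by shifting its index by one.
In `V^{(C)}(k | s, e)` the factor `k - s + 1` (resp. `e - k`) cancels the normalization
`(k - s + 1)⁻¹` of the squared localized CUSUM, so both sides are `n^{-2}` times the sum of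
the squared bridges. The CUSUM `C_n(k)` is `L(k | 1, n)` on the nose.
-/

open Finset

theorem window_length_pos {a b : ℕ} (hab : a ≤ b) : 0 < (b : ℝ) - a + 1 := by
  have : (a : ℝ) ≤ b := by exact_mod_cast hab
  linarith

theorem sum_Icc_comp_succ_eq {M : Type*} [AddCommGroup M] {a b : ℕ} (hab : a ≤ b)
    (f : ℕ → M) (hf : f a = f (b + 1)) :
    ∑ j ∈ Icc a b, f (j + 1) = ∑ j ∈ Icc a b, f j := by
  rw [← sub_eq_zero, ← sum_sub_distrib, sum_Icc_sub hab, hf, sub_self]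

noncomputable def bridge (X : ℕ → ℝ) (a b j : ℕ) : ℝ :=
  ∑ i ∈ Ico a j, X i - ((j : ℝ) - a) / ((b : ℝ) - a + 1) * ∑ i ∈ Icc a b, X i

noncomputable def localCusum (X : ℕ → ℝ) (j s e : ℕ) : ℝ :=
  (√((e : ℝ) - s + 1))⁻¹ * ∑ i ∈ Icc s j, (X i - ((e : ℝ) - s + 1)⁻¹ * ∑ i' ∈ Icc s e, X i')

namespace bridge

variable (X : ℕ → ℝ) {a b : ℕ}

theorem self_left : bridge X a b a = 0 := by simp [bridge]

theorem succ_eq (j : ℕ) : bridge X a b (j + 1) =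
    ∑ i ∈ Icc a j, X i - ((j : ℝ) - a + 1) / ((b : ℝ) - a + 1) * ∑ i ∈ Icc a b, X i := by
  rw [bridge, Ico_add_one_right_eq_Icc, Nat.cast_succ, add_sub_right_comm]

theorem succ_right (hab : a ≤ b) : bridge X a b (b + 1) = 0 := by
  rw [succ_eq, div_self (window_length_pos hab).ne', one_mul, sub_self]

theorem sum_sq_succ (hab : a ≤ b) :
    ∑ j ∈ Icc a b, bridge X a b (j + 1) ^ 2 = ∑ j ∈ Icc a b, bridge X a b j ^ 2 :=
  sum_Icc_comp_succ_eq hab (fun j => bridge X a b j ^ 2) (by rw [self_left, succ_right X hab])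

theorem one_succ (j : ℕ) :
    bridge X 1 b (j + 1) = ∑ i ∈ Icc 1 j, X i - (j : ℝ) / b * ∑ i ∈ Icc 1 b, X i := by
  simp [succ_eq]

theorem neg_eq_tail {i : ℕ} (hai : a ≤ i) (hib : i ≤ b) :
    -bridge X a b i =
      ∑ i' ∈ Icc i b, X i' - ((b : ℝ) - i + 1) / ((b : ℝ) - a + 1) * ∑ i' ∈ Icc a b, X i' := by
  have hsplit : ∑ i' ∈ Icc a b, X i' = ∑ i' ∈ Ico a i, X i' + ∑ i' ∈ Icc i b, X i' := by
    simp only [← Ico_add_one_right_eq_Icc]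
    exact (sum_Ico_consecutive X hai (by omega)).symm
  have hpos := (window_length_pos (hai.trans hib)).ne'
  rw [bridge, ← sub_eq_zero, hsplit]
  field_simp
  ring

theorem sq_eq_tail {k i : ℕ} (hki : k < i) (hib : i ≤ b) :
    bridge X (k + 1) b i ^ 2 =
      (∑ i' ∈ Icc i b, X i' -
        ((b : ℝ) - i + 1) / ((b : ℝ) - k) * ∑ i' ∈ Icc (k + 1) b, X i') ^ 2 := by
  rw [← neg_sq, neg_eq_tail X hki hib]
  push_cast
  ring

end bridge

theorem localCusum_eq_bridge (X : ℕ → ℝ) (j s e : ℕ) (hsj : s ≤ j + 1) :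
    localCusum X j s e = (√((e : ℝ) - s + 1))⁻¹ * bridge X s e (j + 1) := by
  rw [localCusum, bridge.succ_eq, sum_sub_distrib, sum_const, Nat.card_Icc, nsmul_eq_mul,
    Nat.cast_sub hsj]
  push_cast
  ring

theorem mul_sum_sq_localCusum (X : ℕ → ℝ) {s e : ℕ} (hse : s ≤ e) :
    ((e : ℝ) - s + 1) * ∑ j ∈ Icc s e, localCusum X j s e ^ 2 =
      ∑ j ∈ Icc s e, bridge X s e (j + 1) ^ 2 := by
  have hpos := window_length_pos hse
  rw [mul_sum]
  refine sum_congr rfl fun j hj => ?_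
  rw [localCusum_eq_bridge X j s e (by simp at hj; omega), mul_pow, inv_pow,
    Real.sq_sqrt hpos.le, ← mul_assoc, mul_inv_cancel₀ hpos.ne', one_mul]

theorem stmt_9_general (n : ℕ) (X : ℕ → ℝ)
    (ξ : ℕ → ℕ → ℝ)
    (hξ : ∀ k₁ k₂, ξ k₁ k₂ =
      if 1 ≤ k₁ ∧ k₁ ≤ k₂ ∧ k₂ ≤ n then ∑ i ∈ Finset.Icc k₁ k₂, X i else 0)
    (V : ℕ → ℝ)
    (hV : ∀ k, V k = ((n : ℝ) ^ 2)⁻¹ *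
      (∑ i ∈ Finset.Icc 1 k, (ξ 1 i - (i : ℝ) / (k : ℝ) * ξ 1 k) ^ 2
        + ∑ i ∈ Finset.Icc (k + 1) n,
            (ξ i n - ((n : ℝ) - (i : ℝ) + 1) / ((n : ℝ) - (k : ℝ)) * ξ (k + 1) n) ^ 2))
    (L : ℕ → ℕ → ℕ → ℝ)
    (hL : ∀ j s e, L j s e = (Real.sqrt ((e : ℝ) - (s : ℝ) + 1))⁻¹ *
      ∑ i ∈ Finset.Icc s j,
        (X i - ((e : ℝ) - (s : ℝ) + 1)⁻¹ * ∑ i' ∈ Finset.Icc s e, X i'))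
    (VC : ℕ → ℕ → ℕ → ℝ)
    (hVC : ∀ k s e, VC k s e =
      ((k : ℝ) - (s : ℝ) + 1) / ((e : ℝ) - (s : ℝ) + 1) ^ 2 *
          ∑ j ∈ Finset.Icc s k, (L j s k) ^ 2
        + ((e : ℝ) - (k : ℝ)) / ((e : ℝ) - (s : ℝ) + 1) ^ 2 *
            ∑ j ∈ Finset.Icc (k + 1) e, (L j (k + 1) e) ^ 2)
    (C : ℕ → ℝ)
    (hC : ∀ k, C k = (Real.sqrt (n : ℝ))⁻¹ *
      ∑ i ∈ Finset.Icc 1 k, (X i - (n : ℝ)⁻¹ * ξ 1 n)) :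
    ∀ k, 1 ≤ k → k ≤ n - 1 →
      V k = VC k 1 n ∧ (C k) ^ 2 / V k = (L k 1 n) ^ 2 / VC k 1 n := by
  intro k hk₁ hkn
  have hξ_sum : ∀ a b, 1 ≤ a → a ≤ b → b ≤ n → ξ a b = ∑ i ∈ Icc a b, X i :=
    fun a b h₁ h₂ h₃ => by rw [hξ, if_pos ⟨h₁, h₂, h₃⟩]
  obtain rfl : L = localCusum X := funext fun j => funext fun s => funext (hL j s)
  have hCL : C k = localCusum X k 1 n := by
    rw [hC, localCusum, hξ_sum 1 n le_rfl (by omega) le_rfl]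
    simp
  have hleft : ∑ i ∈ Icc 1 k, (ξ 1 i - (i : ℝ) / (k : ℝ) * ξ 1 k) ^ 2 =
      ∑ j ∈ Icc 1 k, bridge X 1 k (j + 1) ^ 2 := by
    refine sum_congr rfl fun i hi => ?_
    rw [mem_Icc] at hi
    rw [bridge.one_succ, hξ_sum 1 i le_rfl hi.1 (by omega), hξ_sum 1 k le_rfl hk₁ (by omega)]
  have hright : ∑ i ∈ Icc (k + 1) n,
        (ξ i n - ((n : ℝ) - (i : ℝ) + 1) / ((n : ℝ) - (k : ℝ)) * ξ (k + 1) n) ^ 2 =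
      ∑ j ∈ Icc (k + 1) n, bridge X (k + 1) n (j + 1) ^ 2 := by
    rw [bridge.sum_sq_succ X (by omega)]
    refine sum_congr rfl fun i hi => ?_
    rw [mem_Icc] at hi
    rw [bridge.sq_eq_tail X hi.1 hi.2, hξ_sum i n (by omega) hi.2 le_rfl,
      hξ_sum (k + 1) n (by omega) (by omega) le_rfl]
  have hVVC : V k = VC k 1 n := by
    rw [hV, hVC, hleft, hright, ← mul_sum_sq_localCusum X hk₁,
      ← mul_sum_sq_localCusum X (by omega : k + 1 ≤ n)]
    push_cast
    ring
  exact ⟨hVVC, by rw [hCL, hVVC]⟩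

/-- Shao and Zhang's self-normalizer `V n k` coincides with the paper's localized
self-normalizer `V^{(C)}(k | 1, n)`, and consequently Shao's one-change-point statistic
`C_n(k)²/V_n(k)` coincides with the locally self-normalized statistic
`L(k | 1, n)²/V^{(C)}(k | 1, n)`. -/
theorem stmt_9 (n : ℕ) (hn : 2 ≤ n) (X : ℕ → ℝ)
    (ξ : ℕ → ℕ → ℝ)
    (hξ : ∀ k₁ k₂, ξ k₁ k₂ =
      if 1 ≤ k₁ ∧ k₁ ≤ k₂ ∧ k₂ ≤ n then ∑ i ∈ Finset.Icc k₁ k₂, X i else 0)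
    (V : ℕ → ℝ)
    (hV : ∀ k, V k = ((n : ℝ) ^ 2)⁻¹ *
      (∑ i ∈ Finset.Icc 1 k, (ξ 1 i - (i : ℝ) / (k : ℝ) * ξ 1 k) ^ 2
        + ∑ i ∈ Finset.Icc (k + 1) n,
            (ξ i n - ((n : ℝ) - (i : ℝ) + 1) / ((n : ℝ) - (k : ℝ)) * ξ (k + 1) n) ^ 2))
    (L : ℕ → ℕ → ℕ → ℝ)
    (hL : ∀ j s e, L j s e = (Real.sqrt ((e : ℝ) - (s : ℝ) + 1))⁻¹ *
      ∑ i ∈ Finset.Icc s j,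
        (X i - ((e : ℝ) - (s : ℝ) + 1)⁻¹ * ∑ i' ∈ Finset.Icc s e, X i'))
    (VC : ℕ → ℕ → ℕ → ℝ)
    (hVC : ∀ k s e, VC k s e =
      ((k : ℝ) - (s : ℝ) + 1) / ((e : ℝ) - (s : ℝ) + 1) ^ 2 *
          ∑ j ∈ Finset.Icc s k, (L j s k) ^ 2
        + ((e : ℝ) - (k : ℝ)) / ((e : ℝ) - (s : ℝ) + 1) ^ 2 *
            ∑ j ∈ Finset.Icc (k + 1) e, (L j (k + 1) e) ^ 2)
    (C : ℕ → ℝ)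
    (hC : ∀ k, C k = (Real.sqrt (n : ℝ))⁻¹ *
      ∑ i ∈ Finset.Icc 1 k, (X i - (n : ℝ)⁻¹ * ξ 1 n)) :
    ∀ k, 1 ≤ k → k ≤ n - 1 →
      V k = VC k 1 n ∧ (C k) ^ 2 / V k = (L k 1 n) ^ 2 / VC k 1 n :=
  stmt_9_general n X ξ hξ V hV L hL VC hVC C hC
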